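/- Equilibrium and characteristic polynomial of the linearization: the point e = (a₁/(a₀ℓ), b₁/(a₀ℓ), a₁/(a₀ℓ), b₁/(a₀ℓ), 0) ∈ ℝ⁵ is a zero of the vector field F, and the characteristic polynomial of the Jacobian matrix DF(e) equals (X + a₀)³ · (X² − 2τX + ζℓa₀/(2π)), where τ = −(1/4)(2a₀ + ζℓ/π + 2λa₁/(a₀ℓ)). In particular DF(e) has the eigenvalue −a₀ with multiplicity three, and two further eigenvalues τ ± √(τ² − ζℓa₀/(2π)). -/

import Mathlib

open Real Set Polynomial

/-- The first-order vector field of the two-row model in the variables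
`(p₁ᶜ, p₁ˢ, q₁ᶜ, q₁ˢ, x)`, with `ζ = 2πk/(ηℓ)` and `λ = 2π²U/(ηℓ)`. -/
noncomputable def motorField (l zeta lam a0 a1 b1 : ℝ) (p : Fin 5 → ℝ) : Fin 5 → ℝ :=
  ![-a0 * p 0 + (zeta * p 4 + (lam / 2) * (p 1 - p 3)) * p 1 + a1 / l,
    -a0 * p 1 - (zeta * p 4 + (lam / 2) * (p 1 - p 3)) * p 0 + b1 / l,
    -a0 * p 2 - (zeta * p 4 + (lam / 2) * (p 1 - p 3)) * p 3 + a1 / l,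
    -a0 * p 3 + (zeta * p 4 + (lam / 2) * (p 1 - p 3)) * p 2 + b1 / l,
    -(l / (2 * π)) * (zeta * p 4 + (lam / 2) * (p 1 - p 3))]

/-- The equilibrium point `e = (a₁/(a₀ℓ), b₁/(a₀ℓ), a₁/(a₀ℓ), b₁/(a₀ℓ), 0)`. -/
noncomputable def motorEq (l a0 a1 b1 : ℝ) : Fin 5 → ℝ :=
  ![a1 / (a0 * l), b1 / (a0 * l), a1 / (a0 * l), b1 / (a0 * l), 0]

/-- The Jacobian matrix of the vector field at the equilibrium point. -/
noncomputable def motorJac (l zeta lam a0 a1 b1 : ℝ) : Matrix (Fin 5) (Fin 5) ℝ :=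
  Matrix.of fun i j =>
    fderiv ℝ (motorField l zeta lam a0 a1 b1) (motorEq l a0 a1 b1) (Pi.single j 1) i

/-!
At the equilibrium `p₁ˢ = q₁ˢ` and `x = 0`, so the coupling `ζx + (λ/2)(p₁ˢ − q₁ˢ)` vanishes
there. Hence the `p₁ᶜ`- and `q₁ᶜ`-columns of the Jacobian are `−a₀` times unit vectors, and
expanding the characteristic determinant along them splits off `(X + a₀)²`. On the remaining
block in `(p₁ˢ, q₁ˢ, x)` the direction `p₁ˢ = q₁ˢ, x = 0` is again an eigenvector for `−a₀`,
which gives the third factor; the quadratic factor collects the rest of its trace and determinant.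
-/

namespace Matrix

variable {R : Type*} [CommRing R]

lemma charmatrix_submatrix {m n : Type*} [Fintype m] [Fintype n] [DecidableEq m] [DecidableEq n]
    (M : Matrix n n R) {e : m → n} (he : Function.Injective e) :
    (M.submatrix e e).charmatrix = M.charmatrix.submatrix e e := by
  ext a b : 1
  by_cases hab : a = b
  · simp [hab, charmatrix_apply_eq]
  · simp [charmatrix_apply_ne _ _ _ hab, charmatrix_apply_ne _ _ _ (he.ne hab)]

lemma charpoly_eq_X_sub_C_mul_charpoly_submatrix {n : ℕ} (M : Matrix (Fin (n + 1)) (Fin (n + 1)) R)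
    (j : Fin (n + 1)) (hM : ∀ i ≠ j, M i j = 0) :
    M.charpoly = (X - C (M j j)) * (M.submatrix j.succAbove j.succAbove).charpoly := by
  rw [charpoly, det_succ_column _ j, Finset.sum_eq_single j]
  · simp [charmatrix_apply_eq, charpoly,
      charmatrix_submatrix _ Fin.succAbove_right_injective, ← two_mul, pow_mul]
  · intro i _ hij
    simp [charmatrix_apply_ne _ _ _ hij, hM i hij]
  · simp

end Matrix

def motorLinearization (a0 mA mB zA zB w g : ℝ) : Matrix (Fin 5) (Fin 5) ℝ :=
  !![-a0, mB, 0, -mB, zB;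
     0, -a0 - mA, 0, mA, -zA;
     0, -mB, -a0, mB, -zB;
     0, mA, 0, -a0 - mA, zA;
     0, -w, 0, w, -g]

lemma charpoly_motorLinearization (a0 mA mB zA zB w g : ℝ) :
    (motorLinearization a0 mA mB zA zB w g).charpoly =
      (X + C a0) ^ 3 *
        (X ^ 2 + C (a0 + 2 * mA + g) * X + C ((a0 + 2 * mA) * g - 2 * zA * w)) := by
  set M := motorLinearization a0 mA mB zA zB w g
  have hcolumn₀ : ∀ i ≠ 0, M i 0 = 0 := by
    intro i hi; fin_cases i <;> simp_all [M, motorLinearization]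
  have hcolumn₁ : ∀ i ≠ 1, M.submatrix (Fin.succAbove 0) (Fin.succAbove 0) i 1 = 0 := by
    intro i hi; fin_cases i <;> simp_all [M, motorLinearization]
  have hblock : (M.submatrix (Fin.succAbove 0) (Fin.succAbove 0)).submatrix
      (Fin.succAbove 1) (Fin.succAbove 1) = !![-a0 - mA, mA, -zA; mA, -a0 - mA, zA; -w, w, -g] := by
    ext i j : 2
    fin_cases i <;> fin_cases j <;> rfl
  rw [M.charpoly_eq_X_sub_C_mul_charpoly_submatrix 0 hcolumn₀,
    Matrix.charpoly_eq_X_sub_C_mul_charpoly_submatrix _ 1 hcolumn₁, hblock, Matrix.charpoly,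
    Matrix.det_fin_three]
  simp [M, motorLinearization, map_ofNat C 2]
  ring

section MotorField

variable (l zeta lam a0 a1 b1 : ℝ)

noncomputable def motorCoupling : (Fin 5 → ℝ) →L[ℝ] ℝ :=
  zeta • .proj 4 + (lam / 2) • (.proj 1 - .proj 3)

lemma motorCoupling_apply (p : Fin 5 → ℝ) :
    motorCoupling zeta lam p = zeta * p 4 + lam / 2 * (p 1 - p 3) := rfl

lemma motorField_eq (p : Fin 5 → ℝ) :
    motorField l zeta lam a0 a1 b1 p =
      ![-a0 * p 0 + motorCoupling zeta lam p * p 1 + a1 / l,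
        -a0 * p 1 - motorCoupling zeta lam p * p 0 + b1 / l,
        -a0 * p 2 - motorCoupling zeta lam p * p 3 + a1 / l,
        -a0 * p 3 + motorCoupling zeta lam p * p 2 + b1 / l,
        -(l / (2 * π)) * motorCoupling zeta lam p] := rfl

lemma hasFDerivAt_motorField (p : Fin 5 → ℝ) :
    HasFDerivAt (motorField l zeta lam a0 a1 b1)
      (.pi ![(-a0) • .proj 0 + (motorCoupling zeta lam p • .proj 1 + p 1 • motorCoupling zeta lam),
        (-a0) • .proj 1 - (motorCoupling zeta lam p • .proj 0 + p 0 • motorCoupling zeta lam),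
        (-a0) • .proj 2 - (motorCoupling zeta lam p • .proj 3 + p 3 • motorCoupling zeta lam),
        (-a0) • .proj 3 + (motorCoupling zeta lam p • .proj 2 + p 2 • motorCoupling zeta lam),
        (-(l / (2 * π))) • motorCoupling zeta lam]) p := by
  have hc := (motorCoupling zeta lam).hasFDerivAt (x := p)
  rw [funext (motorField_eq l zeta lam a0 a1 b1)]
  refine hasFDerivAt_pi'.2 fun i => ?_
  rw [ContinuousLinearMap.proj_pi]
  fin_cases i
  · exact (((hasFDerivAt_apply 0 p).const_mul (-a0)).add
      (hc.mul (hasFDerivAt_apply 1 p))).add_const _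
  · exact (((hasFDerivAt_apply 1 p).const_mul (-a0)).sub
      (hc.mul (hasFDerivAt_apply 0 p))).add_const _
  · exact (((hasFDerivAt_apply 2 p).const_mul (-a0)).sub
      (hc.mul (hasFDerivAt_apply 3 p))).add_const _
  · exact (((hasFDerivAt_apply 3 p).const_mul (-a0)).add
      (hc.mul (hasFDerivAt_apply 2 p))).add_const _
  · exact hc.const_mul _

lemma motorCoupling_motorEq : motorCoupling zeta lam (motorEq l a0 a1 b1) = 0 := by
  simp [motorCoupling_apply, motorEq]

lemma motorField_motorEq (hl : l ≠ 0) (ha0 : a0 ≠ 0) :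
    motorField l zeta lam a0 a1 b1 (motorEq l a0 a1 b1) = 0 := by
  rw [motorField_eq, motorCoupling_motorEq]
  ext i
  fin_cases i <;> simp [motorEq] <;> field_simp <;> ring

lemma motorJac_eq : motorJac l zeta lam a0 a1 b1 =
    motorLinearization a0 (lam / 2 * (a1 / (a0 * l))) (lam / 2 * (b1 / (a0 * l)))
      (zeta * (a1 / (a0 * l))) (zeta * (b1 / (a0 * l))) (l / (2 * π) * (lam / 2))
      (l / (2 * π) * zeta) := by
  ext i j
  rw [motorJac, Matrix.of_apply, (hasFDerivAt_motorField l zeta lam a0 a1 b1 _).fderiv,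
    motorCoupling_motorEq, ContinuousLinearMap.pi_apply]
  fin_cases i <;> fin_cases j <;>
    simp only [motorLinearization, motorEq, motorCoupling_apply, Matrix.of_apply, Fin.zero_eta,
      Fin.mk_one, Fin.reduceFinMk, Fin.isValue, Matrix.cons_val_zero, Matrix.cons_val_one,
      Matrix.cons_val, Matrix.cons_val', Matrix.cons_val_fin_one, add_apply, sub_apply, smul_apply,
      ContinuousLinearMap.proj_apply, Pi.single_eq_same, Pi.single_eq_of_ne, ne_eq, Fin.reduceEq,
      not_false_eq_true, smul_eq_mul] <;>
    ring

end MotorField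

theorem motorField_equilibrium_charpoly_general
    (l zeta lam a0 a1 b1 : ℝ)
    (hl : 0 < l) (ha0 : 0 < a0)
    (τ : ℝ) (hτ : τ = -(1 / 4) * (2 * a0 + zeta * l / π + 2 * lam * a1 / (a0 * l))) :
    motorField l zeta lam a0 a1 b1 (motorEq l a0 a1 b1) = 0 ∧
    (motorJac l zeta lam a0 a1 b1).charpoly
      = (X + C a0) ^ 3 * (X ^ 2 - C (2 * τ) * X + C (zeta * l * a0 / (2 * π))) ∧
    3 ≤ (motorJac l zeta lam a0 a1 b1).charpoly.rootMultiplicity (-a0) ∧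
    Module.End.HasEigenvalue
      (Matrix.toLin' (motorJac l zeta lam a0 a1 b1)) (-a0) := by
  have hcharpoly : (motorJac l zeta lam a0 a1 b1).charpoly
      = (X + C a0) ^ 3 * (X ^ 2 - C (2 * τ) * X + C (zeta * l * a0 / (2 * π))) := by
    have htrace : a0 + 2 * (lam / 2 * (a1 / (a0 * l))) + l / (2 * π) * zeta = -(2 * τ) := by
      rw [hτ]; field_simp; ring
    have hdet : (a0 + 2 * (lam / 2 * (a1 / (a0 * l)))) * (l / (2 * π) * zeta) -
        2 * (zeta * (a1 / (a0 * l))) * (l / (2 * π) * (lam / 2)) = zeta * l * a0 / (2 * π) := by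
      field_simp; ring
    rw [motorJac_eq, charpoly_motorLinearization, htrace, hdet, map_neg, neg_mul, ← sub_eq_add_neg]
  have hmult : 3 ≤ (motorJac l zeta lam a0 a1 b1).charpoly.rootMultiplicity (-a0) := by
    rw [le_rootMultiplicity_iff (Matrix.charpoly_monic _).ne_zero, hcharpoly, map_neg,
      sub_neg_eq_add]
    exact dvd_mul_right _ _
  refine ⟨motorField_motorEq l zeta lam a0 a1 b1 hl.ne' ha0.ne', hcharpoly, hmult, ?_⟩
  rw [Module.End.hasEigenvalue_iff_isRoot_charpoly, Matrix.charpoly_toLin',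
    ← rootMultiplicity_pos (Matrix.charpoly_monic _).ne_zero]
  omega

/-- **Equilibrium and characteristic polynomial of the linearization**: `e` is a
zero of the vector field, and the characteristic polynomial of the Jacobian at `e`
is `(X + a₀)³ (X² − 2τX + ζℓa₀/(2π))` with
`τ = −(1/4)(2a₀ + ζℓ/π + 2λa₁/(a₀ℓ))`; in particular `−a₀` is an eigenvalue of
multiplicity (at least) three. -/
theorem motorField_equilibrium_charpoly
    (l zeta lam a0 a1 b1 : ℝ)
    (hl : 0 < l) (hzeta : 0 < zeta) (hlam : 0 < lam) (ha0 : 0 < a0)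
    (τ : ℝ) (hτ : τ = -(1 / 4) * (2 * a0 + zeta * l / π + 2 * lam * a1 / (a0 * l))) :
    motorField l zeta lam a0 a1 b1 (motorEq l a0 a1 b1) = 0 ∧
    (motorJac l zeta lam a0 a1 b1).charpoly
      = (X + C a0) ^ 3 * (X ^ 2 - C (2 * τ) * X + C (zeta * l * a0 / (2 * π))) ∧
    3 ≤ (motorJac l zeta lam a0 a1 b1).charpoly.rootMultiplicity (-a0) ∧
    Module.End.HasEigenvalue
      (Matrix.toLin' (motorJac l zeta lam a0 a1 b1)) (-a0) :=
  motorField_equilibrium_charpoly_general l zeta lam a0 a1 b1 hl ha0 τ hτ
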